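/- arXiv:1711.09995 — 2 statements merged into one kernel-verified Lean document; each statement's English description precedes it below -/
import Mathlib

section
/- Let M be a monoid with identity e and let s_1, s_2, s_ε ∈ M satisfy s_1² = s_2² = e, s_ε² = s_ε and s_1 s_2 s_1 = s_2 s_1 s_2. Then s_ε s_1 s_2 s_1 = s_1 s_2 s_1 s_ε holds if and only if s_1 s_2 s_ε s_2 = s_2 s_ε s_2 s_1 holds. Moreover, if these equivalent identities hold, then the identities s_ε s_1 s_ε = s_ε s_1 s_ε s_1 = s_1 s_ε s_1 s_ε hold if and only if the identities s_ε s_2 s_ε = s_ε s_2 s_ε s_2 = s_2 s_ε s_2 s_ε hold. -/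
/-- If `w * s₂' = s₁' * w`, `s₂' * w = w * s₁'` and `t` is fixed by left/right
multiplication by `s₁'`, then `w * t * w` is fixed by left/right multiplication
by `s₂'`. -/
lemma conj_fix {M : Type*} [Monoid M] (w s₁' s₂' t : M)
    (hws : w * s₂' = s₁' * w) (hsw : s₂' * w = w * s₁')
    (ht1 : t * s₁' = t) (ht2 : s₁' * t = t) :
    w * t * w * s₂' = w * t * w ∧ s₂' * (w * t * w) = w * t * w := by
  constructor
  · calc w * t * w * s₂' = w * t * (w * s₂') := by rw [mul_assoc]
      _ = w * t * (s₁' * w) := by rw [hws]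
      _ = w * (t * s₁') * w := by simp [mul_assoc]
      _ = w * t * w := by rw [ht1]
  · calc s₂' * (w * t * w) = s₂' * w * t * w := by simp [mul_assoc]
      _ = w * s₁' * t * w := by rw [hsw]
      _ = w * (s₁' * t) * w := by simp [mul_assoc]
      _ = w * t * w := by rw [ht2]

/-- Auxiliary lemma: one direction of the second equivalence, stated
symmetrically in `s₁, s₂` so it can be applied twice. -/
lemma three_cycle_aux {M : Type*} [Monoid M] (s₁ s₂ sε : M)
    (h1 : s₁ * s₁ = 1) (h2 : s₂ * s₂ = 1)
    (hb : s₁ * s₂ * s₁ = s₂ * s₁ * s₂)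
    (hc : sε * (s₁ * s₂ * s₁) = s₁ * s₂ * s₁ * sε)
    (hA : sε * s₁ * sε = sε * s₁ * sε * s₁)
    (hB : sε * s₁ * sε * s₁ = s₁ * sε * s₁ * sε) :
    sε * s₂ * sε = sε * s₂ * sε * s₂ ∧
      sε * s₂ * sε * s₂ = s₂ * sε * s₂ * sε := by
  have a1 : ∀ x : M, s₁ * (s₁ * x) = x := fun x => by rw [← mul_assoc, h1, one_mul]
  have a2 : ∀ x : M, s₂ * (s₂ * x) = x := fun x => by rw [← mul_assoc, h2, one_mul]
  have hbe : s₁ * (s₂ * s₁) = s₂ * (s₁ * s₂) := by simpa [mul_assoc] using hb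
  have hbr : ∀ x : M, s₁ * (s₂ * (s₁ * x)) = s₂ * (s₁ * (s₂ * x)) := fun x => by
    simpa [mul_assoc] using congrArg (· * x) hb
  have hcn : sε * (s₁ * (s₂ * s₁)) = s₁ * (s₂ * (s₁ * sε)) := by
    simpa [mul_assoc] using hc
  have hcx : ∀ x : M, sε * (s₁ * (s₂ * (s₁ * x))) = s₁ * (s₂ * (s₁ * (sε * x))) :=
    fun x => by simpa [mul_assoc] using congrArg (· * x) hc
  -- w * s₂ = s₁ * w  (both sides equal s₂ * s₁)
  have hws : (s₁ * s₂ * s₁) * s₂ = s₁ * (s₁ * s₂ * s₁) := by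
    calc (s₁ * s₂ * s₁) * s₂ = s₁ * (s₂ * (s₁ * s₂)) := by simp [mul_assoc]
      _ = s₂ * (s₁ * (s₂ * s₂)) := hbr s₂
      _ = s₂ * (s₁ * 1) := by rw [h2]
      _ = s₂ * s₁ := by rw [mul_one]
      _ = s₁ * (s₁ * (s₂ * s₁)) := (a1 _).symm
      _ = s₁ * (s₁ * s₂ * s₁) := by simp [mul_assoc]
  -- s₂ * w = w * s₁  (both sides equal s₁ * s₂)
  have hsw : s₂ * (s₁ * s₂ * s₁) = (s₁ * s₂ * s₁) * s₁ := by
    calc s₂ * (s₁ * s₂ * s₁) = s₂ * (s₁ * (s₂ * s₁)) := by simp [mul_assoc]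
      _ = s₂ * (s₂ * (s₁ * s₂)) := by rw [hbe]
      _ = s₁ * s₂ := a2 _
      _ = s₁ * (s₂ * (s₁ * s₁)) := by rw [h1, mul_one]
      _ = (s₁ * s₂ * s₁) * s₁ := by simp [mul_assoc]
  have ht1 : (sε * s₁ * sε) * s₁ = sε * s₁ * sε := hA.symm
  have ht2 : s₁ * (sε * s₁ * sε) = sε * s₁ * sε := by
    calc s₁ * (sε * s₁ * sε) = s₁ * sε * s₁ * sε := by simp [mul_assoc]
      _ = sε * s₁ * sε * s₁ := hB.symm
      _ = sε * s₁ * sε := hA.symm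
  -- sε * s₂ * sε = w * t * w  with w = s₁s₂s₁, t = sε s₁ sε
  have hu : sε * s₂ * sε = (s₁ * s₂ * s₁) * (sε * s₁ * sε) * (s₁ * s₂ * s₁) := by
    symm
    calc (s₁ * s₂ * s₁) * (sε * s₁ * sε) * (s₁ * s₂ * s₁)
        = s₁ * (s₂ * (s₁ * (sε * (s₁ * (sε * (s₁ * (s₂ * s₁))))))) := by
          simp [mul_assoc]
      _ = s₁ * (s₂ * (s₁ * (sε * (s₁ * (s₁ * (s₂ * (s₁ * sε))))))) := by rw [hcn]
      _ = s₁ * (s₂ * (s₁ * (sε * (s₂ * (s₁ * sε))))) := by rw [a1]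
      _ = sε * (s₁ * (s₂ * (s₁ * (s₂ * (s₁ * sε))))) := by rw [← hcx]
      _ = sε * (s₂ * (s₁ * (s₂ * (s₂ * (s₁ * sε))))) := by rw [hbr]
      _ = sε * (s₂ * (s₁ * (s₁ * sε))) := by rw [a2]
      _ = sε * (s₂ * sε) := by rw [a1]
      _ = sε * s₂ * sε := by rw [mul_assoc]
  obtain ⟨f1, f2⟩ := conj_fix (s₁ * s₂ * s₁) s₁ s₂ (sε * s₁ * sε) hws hsw ht1 ht2
  have G1 : sε * s₂ * sε = sε * s₂ * sε * s₂ := by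
    rw [hu]; exact f1.symm
  refine ⟨G1, ?_⟩
  calc sε * s₂ * sε * s₂ = sε * s₂ * sε := G1.symm
    _ = s₂ * (sε * s₂ * sε) := by rw [hu]; exact f2.symm
    _ = s₂ * sε * s₂ * sε := by simp [mul_assoc]

/-- **Statement 9.** In a monoid with `s₁² = s₂² = e`, `s_ε² = s_ε` and the braid
relation `s₁s₂s₁ = s₂s₁s₂`, the identities `s_ε s₁ s₂ s₁ = s₁ s₂ s₁ s_ε` and
`s₁ s₂ s_ε s₂ = s₂ s_ε s₂ s₁` are equivalent; and if they hold, then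
`s_ε s₁ s_ε = s_ε s₁ s_ε s₁ = s₁ s_ε s₁ s_ε` holds iff
`s_ε s₂ s_ε = s_ε s₂ s_ε s₂ = s₂ s_ε s₂ s_ε` holds. -/
theorem three_cycle_relations_equiv {M : Type*} [Monoid M] (s₁ s₂ sε : M)
    (h1 : s₁ * s₁ = 1) (h2 : s₂ * s₂ = 1) (he : sε * sε = sε)
    (hb : s₁ * s₂ * s₁ = s₂ * s₁ * s₂) :
    (sε * s₁ * s₂ * s₁ = s₁ * s₂ * s₁ * sε ↔
      s₁ * s₂ * sε * s₂ = s₂ * sε * s₂ * s₁) ∧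
    (sε * s₁ * s₂ * s₁ = s₁ * s₂ * s₁ * sε →
      ((sε * s₁ * sε = sε * s₁ * sε * s₁ ∧
          sε * s₁ * sε * s₁ = s₁ * sε * s₁ * sε) ↔
       (sε * s₂ * sε = sε * s₂ * sε * s₂ ∧
          sε * s₂ * sε * s₂ = s₂ * sε * s₂ * sε))) := by
  have a1 : ∀ x : M, s₁ * (s₁ * x) = x := fun x => by rw [← mul_assoc, h1, one_mul]
  have a2 : ∀ x : M, s₂ * (s₂ * x) = x := fun x => by rw [← mul_assoc, h2, one_mul]
  have hbe : s₁ * (s₂ * s₁) = s₂ * (s₁ * s₂) := by simpa [mul_assoc] using hb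
  have hbr : ∀ x : M, s₁ * (s₂ * (s₁ * x)) = s₂ * (s₁ * (s₂ * x)) := fun x => by
    simpa [mul_assoc] using congrArg (· * x) hb
  constructor
  · constructor
    · intro H
      have Hn : sε * (s₁ * (s₂ * s₁)) = s₁ * (s₂ * (s₁ * sε)) := by
        simpa [mul_assoc] using H
      have H2n : sε * (s₂ * (s₁ * s₂)) = s₂ * (s₁ * (s₂ * sε)) := by
        rw [← hbe, ← hbr]; exact Hn
      have H2x : ∀ x : M, sε * (s₂ * (s₁ * (s₂ * x))) = s₂ * (s₁ * (s₂ * (sε * x))) :=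
        fun x => by simpa [mul_assoc] using congrArg (· * x) H2n
      have e1 : sε * s₂ = s₂ * (s₁ * (s₂ * (sε * (s₂ * s₁)))) := by
        have h := H2x (s₂ * s₁)
        rw [a2, h1, mul_one] at h
        exact h
      calc s₁ * s₂ * sε * s₂ = s₁ * (s₂ * (sε * s₂)) := by simp [mul_assoc]
        _ = s₁ * (s₂ * (s₂ * (s₁ * (s₂ * (sε * (s₂ * s₁)))))) := by rw [e1]
        _ = s₂ * (sε * (s₂ * s₁)) := by rw [a2, a1]
        _ = s₂ * sε * s₂ * s₁ := by simp [mul_assoc]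
    · intro H
      have Hx : ∀ x : M, s₁ * (s₂ * (sε * (s₂ * x))) = s₂ * (sε * (s₂ * (s₁ * x))) :=
        fun x => by simpa [mul_assoc] using congrArg (· * x) H
      have key : s₂ * (s₁ * (s₂ * (sε * (s₂ * (s₁ * s₂))))) = sε := by
        calc s₂ * (s₁ * (s₂ * (sε * (s₂ * (s₁ * s₂)))))
            = s₂ * (s₂ * (sε * (s₂ * (s₁ * (s₁ * s₂))))) := by rw [Hx (s₁ * s₂)]
          _ = sε * (s₂ * (s₁ * (s₁ * s₂))) := a2 _
          _ = sε * (s₂ * s₂) := by rw [a1]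
          _ = sε := by rw [h2, mul_one]
      have key2 : sε * (s₂ * (s₁ * s₂)) = s₂ * (s₁ * (s₂ * sε)) := by
        have h := congrArg (· * (s₂ * s₁ * s₂)) key
        simp only [mul_assoc] at h
        rw [a2, a1, h2, mul_one] at h
        exact h.symm
      show sε * s₁ * s₂ * s₁ = s₁ * s₂ * s₁ * sε
      calc sε * s₁ * s₂ * s₁ = sε * (s₁ * (s₂ * s₁)) := by simp [mul_assoc]
        _ = sε * (s₂ * (s₁ * s₂)) := by rw [hbe]
        _ = s₂ * (s₁ * (s₂ * sε)) := key2
        _ = s₁ * (s₂ * (s₁ * sε)) := (hbr sε).symm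
        _ = s₁ * s₂ * s₁ * sε := by simp [mul_assoc]
  · intro H
    have Hc : sε * (s₁ * s₂ * s₁) = s₁ * s₂ * s₁ * sε := by
      simpa [mul_assoc] using H
    have Hc' : sε * (s₂ * s₁ * s₂) = s₂ * s₁ * s₂ * sε := by
      rw [← hb]; exact Hc
    constructor
    · rintro ⟨hA, hB⟩
      exact three_cycle_aux s₁ s₂ sε h1 h2 hb Hc hA hB
    · rintro ⟨hA, hB⟩
      exact three_cycle_aux s₂ s₁ sε h2 h1 hb.symm Hc' hA hB
end

section
/- Let M be a monoid with identity e and let s_1, s_2, s_3, s_ε ∈ M satisfy s_1² = s_2² = s_3² = e, s_ε² = s_ε, s_1 s_2 s_1 = s_2 s_1 s_2, s_2 s_3 s_2 = s_3 s_2 s_3, s_1 s_3 = s_3 s_1, and s_2 s_ε = s_ε s_2. Then s_ε s_1 s_2 s_3 s_2 s_1 = s_1 s_2 s_3 s_2 s_1 s_ε holds if and only if s_1 s_2 s_3 s_ε s_3 s_2 = s_2 s_3 s_ε s_3 s_2 s_1 holds. Moreover, if these equivalent identities hold, then the identities s_ε s_1 s_ε = s_ε s_1 s_ε s_1 = s_1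 s_ε s_1 s_ε hold if and only if the identities s_ε s_3 s_ε = s_ε s_3 s_ε s_3 = s_3 s_ε s_3 s_ε hold. -/
private lemma conj_eq_iff {M : Type*} [Monoid M] (t a b : M) (ht : t * t = 1) :
    a = b ↔ t * a * t = t * b * t := by
  constructor
  · intro h; rw [h]
  · intro h
    have h2 := congrArg (fun z => t * z * t) h
    simp only [mul_assoc] at h2
    simp only [← mul_assoc t t, ht, one_mul] at h2
    simp only [ht, mul_one] at h2
    exact h2

private lemma conj_transfer {M : Type*} [Monoid M] (v v' a x y : M)
    (hv : v * v' = 1) (hv' : v' * v = 1)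
    (hva : v * a = a * v) (hv'a : v' * a = a * v') (hx : v * x * v' = y)
    (h : a * x * a = a * x * a * x ∧ a * x * a * x = x * a * x * a) :
    a * y * a = a * y * a * y ∧ a * y * a * y = y * a * y * a := by
  subst hx
  have rvv' : ∀ z : M, v * (v' * z) = z := fun z => by rw [← mul_assoc, hv, one_mul]
  have rv'v : ∀ z : M, v' * (v * z) = z := fun z => by rw [← mul_assoc, hv', one_mul]
  have rva : ∀ z : M, v * (a * z) = a * (v * z) := fun z => by
    rw [← mul_assoc, hva, mul_assoc]
  have rv'a : ∀ z : M, v' * (a * z) = a * (v' * z) := fun z => by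
    rw [← mul_assoc, hv'a, mul_assoc]
  have E1 : a * (v * x * v') * a = v * (a * x * a) * v' := by
    simp only [mul_assoc]
    simp only [rvv', rv'v, rva, rv'a, hv, hv', hva, hv'a, one_mul, mul_one]
  have E2 : a * (v * x * v') * a * (v * x * v') = v * (a * x * a * x) * v' := by
    simp only [mul_assoc]
    simp only [rvv', rv'v, rva, rv'a, hv, hv', hva, hv'a, one_mul, mul_one]
  have E3 : v * x * v' * a * (v * x * v') * a = v * (x * a * x * a) * v' := by
    simp only [mul_assoc]
    simp only [rvv', rv'v, rva, rv'a, hv, hv', hva, hv'a, one_mul, mul_one]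
  refine ⟨?_, ?_⟩
  · rw [E2, E1, ← h.1]
  · rw [E2, E3, h.2]

/-- **Statement 11.** In a monoid with `s₁² = s₂² = s₃² = e`, `s_ε² = s_ε`, the
braid relations `s₁s₂s₁ = s₂s₁s₂`, `s₂s₃s₂ = s₃s₂s₃`, commutation `s₁s₃ = s₃s₁`
and `s₂s_ε = s_εs₂`:  the identities `s_ε s₁s₂s₃s₂s₁ = s₁s₂s₃s₂s₁ s_ε` and
`s₁s₂s₃ s_ε s₃s₂ = s₂s₃ s_ε s₃s₂s₁` are equivalent; and if they hold, then
`s_ε s₁ s_ε = s_ε s₁ s_ε s₁ = s₁ s_ε s₁ s_ε` holds iff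
`s_ε s₃ s_ε = s_ε s₃ s_ε s₃ = s₃ s_ε s₃ s_ε` holds. -/
theorem four_cycle_relations_equiv {M : Type*} [Monoid M] (s₁ s₂ s₃ sε : M)
    (h1 : s₁ * s₁ = 1) (h2 : s₂ * s₂ = 1) (h3 : s₃ * s₃ = 1) (he : sε * sε = sε)
    (hb12 : s₁ * s₂ * s₁ = s₂ * s₁ * s₂) (hb23 : s₂ * s₃ * s₂ = s₃ * s₂ * s₃)
    (hc13 : s₁ * s₃ = s₃ * s₁) (hc2e : s₂ * sε = sε * s₂) :
    (sε * s₁ * s₂ * s₃ * s₂ * s₁ = s₁ * s₂ * s₃ * s₂ * s₁ * sε ↔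
      s₁ * s₂ * s₃ * sε * s₃ * s₂ = s₂ * s₃ * sε * s₃ * s₂ * s₁) ∧
    (sε * s₁ * s₂ * s₃ * s₂ * s₁ = s₁ * s₂ * s₃ * s₂ * s₁ * sε →
      ((sε * s₁ * sε = sε * s₁ * sε * s₁ ∧
          sε * s₁ * sε * s₁ = s₁ * sε * s₁ * sε) ↔
       (sε * s₃ * sε = sε * s₃ * sε * s₃ ∧
          sε * s₃ * sε * s₃ = s₃ * sε * s₃ * sε))) := by
  have r11 : ∀ x : M, s₁ * (s₁ * x) = x := fun x => by rw [← mul_assoc, h1, one_mul]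
  have r22 : ∀ x : M, s₂ * (s₂ * x) = x := fun x => by rw [← mul_assoc, h2, one_mul]
  have r33 : ∀ x : M, s₃ * (s₃ * x) = x := fun x => by rw [← mul_assoc, h3, one_mul]
  have r31 : ∀ x : M, s₃ * (s₁ * x) = s₁ * (s₃ * x) := fun x => by
    rw [← mul_assoc, ← hc13, mul_assoc]
  have e31 : s₃ * s₁ = s₁ * s₃ := hc13.symm
  have re2 : ∀ x : M, sε * (s₂ * x) = s₂ * (sε * x) := fun x => by
    rw [← mul_assoc, ← hc2e, mul_assoc]
  have ee2 : sε * s₂ = s₂ * sε := hc2e.symm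
  have b212 : ∀ x : M, s₂ * (s₁ * (s₂ * x)) = s₁ * (s₂ * (s₁ * x)) := fun x => by
    rw [← mul_assoc, ← mul_assoc, ← hb12, mul_assoc, mul_assoc]
  have eb212 : s₂ * (s₁ * s₂) = s₁ * (s₂ * s₁) := by
    rw [← mul_assoc, ← hb12, mul_assoc]
  have b323 : ∀ x : M, s₃ * (s₂ * (s₃ * x)) = s₂ * (s₃ * (s₂ * x)) := fun x => by
    rw [← mul_assoc, ← mul_assoc, ← hb23, mul_assoc, mul_assoc]
  have eb323 : s₃ * (s₂ * s₃) = s₂ * (s₃ * s₂) := by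
    rw [← mul_assoc, ← hb23, mul_assoc]
  constructor
  · -- Part 1: the two identities are equivalent.
    have e1a : s₃*(sε*s₁*s₂*s₃*s₂*s₁)*s₃ = (s₃*sε*s₃)*(s₂*s₁*s₂) := by
      simp only [mul_assoc]
      simp only [r11, r22, r33, h1, h2, h3, r31, e31, b212, eb212, b323, eb323,
        one_mul, mul_one]
      rw [hc13, b323, r22]
    have e1b : s₃*(s₁*s₂*s₃*s₂*s₁*sε)*s₃ = (s₂*s₁*s₂)*(s₃*sε*s₃) := by
      simp only [mul_assoc]
      simp only [r11, r22, r33, h1, h2, h3, r31, e31, b212, eb212, b323, eb323,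
        one_mul, mul_one]
    have e2a : s₂*((s₃*sε*s₃)*(s₂*s₁*s₂))*s₂ = (s₂*s₃*sε*s₃*s₂)*s₁ := by
      simp only [mul_assoc]
      simp only [r11, r22, r33, h1, h2, h3, r31, e31, b212, eb212, b323, eb323,
        one_mul, mul_one]
    have e2b : s₂*((s₂*s₁*s₂)*(s₃*sε*s₃))*s₂ = s₁*(s₂*s₃*sε*s₃*s₂) := by
      simp only [mul_assoc]
      simp only [r11, r22, r33, h1, h2, h3, r31, e31, b212, eb212, b323, eb323,
        one_mul, mul_one]
    have step1 := conj_eq_iff s₃ (sε*s₁*s₂*s₃*s₂*s₁) (s₁*s₂*s₃*s₂*s₁*sε) h3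
    rw [e1a, e1b] at step1
    have step2 := conj_eq_iff s₂ ((s₃*sε*s₃)*(s₂*s₁*s₂)) ((s₂*s₁*s₂)*(s₃*sε*s₃)) h2
    rw [e2a, e2b] at step2
    have final : ((s₂*s₃*sε*s₃*s₂)*s₁ = s₁*(s₂*s₃*sε*s₃*s₂)) ↔
        (s₁ * s₂ * s₃ * sε * s₃ * s₂ = s₂ * s₃ * sε * s₃ * s₂ * s₁) := by
      rw [show s₁*(s₂*s₃*sε*s₃*s₂) = s₁*s₂*s₃*sε*s₃*s₂ by simp [mul_assoc]]
      exact eq_comm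
    exact step1.trans (step2.trans final)
  · -- Part 2
    intro H1
    have hwR : ∀ x : M, sε*(s₁*(s₂*(s₃*(s₂*(s₁*x))))) =
        s₁*(s₂*(s₃*(s₂*(s₁*(sε*x))))) := by
      intro x
      have h2 := congrArg (· * x) H1
      simpa only [mul_assoc] using h2
    have ewR : sε*(s₁*(s₂*(s₃*(s₂*s₁)))) = s₁*(s₂*(s₃*(s₂*(s₁*sε)))) := by
      simpa only [mul_assoc] using H1
    set v : M := s₂*(s₁*s₂*s₃*s₂*s₁) with hv_def
    set v' : M := (s₁*s₂*s₃*s₂*s₁)*s₂ with hv'_def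
    have K2a : v * v' = 1 := by
      rw [hv_def, hv'_def]
      simp only [mul_assoc]
      simp only [r11, r22, r33, h1, h2, h3, r31, e31, b212, eb212, b323, eb323,
        one_mul, mul_one]
    have K2b : v' * v = 1 := by
      rw [hv_def, hv'_def]
      simp only [mul_assoc]
      simp only [r11, r22, r33, h1, h2, h3, r31, e31, b212, eb212, b323, eb323,
        one_mul, mul_one]
    have K3a : v * sε = sε * v := by
      rw [hv_def]
      calc s₂*(s₁*s₂*s₃*s₂*s₁)*sε
          = s₂*(s₁*s₂*s₃*s₂*s₁*sε) := by simp only [mul_assoc]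
        _ = s₂*(sε*s₁*s₂*s₃*s₂*s₁) := by rw [← H1]
        _ = s₂*sε*(s₁*s₂*s₃*s₂*s₁) := by simp only [mul_assoc]
        _ = sε*s₂*(s₁*s₂*s₃*s₂*s₁) := by rw [hc2e]
        _ = sε*(s₂*(s₁*s₂*s₃*s₂*s₁)) := by simp only [mul_assoc]
    have K3b : v' * sε = sε * v' := by
      rw [hv'_def]
      calc (s₁*s₂*s₃*s₂*s₁)*s₂*sε
          = s₁*s₂*s₃*s₂*s₁*(s₂*sε) := by simp only [mul_assoc]
        _ = s₁*s₂*s₃*s₂*s₁*(sε*s₂) := by rw [hc2e]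
        _ = s₁*s₂*s₃*s₂*s₁*sε*s₂ := by simp only [mul_assoc]
        _ = sε*s₁*s₂*s₃*s₂*s₁*s₂ := by rw [← H1]
        _ = sε*((s₁*s₂*s₃*s₂*s₁)*s₂) := by simp only [mul_assoc]
    have K1 : v * s₁ * v' = s₃ := by
      rw [hv_def, hv'_def]
      simp only [mul_assoc]
      simp only [r11, r22, r33, h1, h2, h3, r31, e31, b212, eb212, b323, eb323,
        one_mul, mul_one]
    have K4 : v' * s₃ * v = s₁ := by
      rw [hv_def, hv'_def]
      simp only [mul_assoc]
      simp only [r11, r22, r33, h1, h2, h3, r31, e31, b212, eb212, b323, eb323,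
        one_mul, mul_one]
    constructor
    · exact fun h => conj_transfer v v' sε s₁ s₃ K2a K2b K3a K3b K1 h
    · exact fun h => conj_transfer v' v sε s₃ s₁ K2b K2a K3b K3a K4 h
end
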